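/- arXiv:math/0509327 — 2 statements merged into one kernel-verified Lean document; each statement's English description precedes it below -/
import Mathlib

section
/- Let A : H1 → H2 be (S,T)-complementable. Then there exist projections P ∈ L(H1) and Q ∈ L(H2) with R(P*) = S, R(Q) = T, and Q A = A P = A/(S,T). -/
open ContinuousLinearMap Submodule

noncomputable def projC {H : Type*} [NormedAddCommGroup H] [InnerProductSpace ℂ H]
    [CompleteSpace H] (S : Submodule ℂ H) [CompleteSpace S] : H →L[ℂ] H :=
  S.subtypeL ∘L orthogonalProjection S

variable {H₁ H₂ : Type*} [NormedAddCommGroup H₁] [InnerProductSpace ℂ H₁] [CompleteSpace H₁]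
  [NormedAddCommGroup H₂] [InnerProductSpace ℂ H₂] [CompleteSpace H₂]

noncomputable def blk11 (S : Submodule ℂ H₁) [CompleteSpace S]
    (T : Submodule ℂ H₂) [CompleteSpace T] (A : H₁ →L[ℂ] H₂) : H₁ →L[ℂ] H₂ :=
  projC T ∘L A ∘L projC S

noncomputable def blk12 (S : Submodule ℂ H₁) [CompleteSpace S]
    (T : Submodule ℂ H₂) [CompleteSpace T] (A : H₁ →L[ℂ] H₂) : H₁ →L[ℂ] H₂ :=
  projC T ∘L A ∘L (1 - projC S)

noncomputable def blk21 (S : Submodule ℂ H₁) [CompleteSpace S]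
    (T : Submodule ℂ H₂) [CompleteSpace T] (A : H₁ →L[ℂ] H₂) : H₁ →L[ℂ] H₂ :=
  (1 - projC T) ∘L A ∘L projC S

noncomputable def blk22 (S : Submodule ℂ H₁) [CompleteSpace S]
    (T : Submodule ℂ H₂) [CompleteSpace T] (A : H₁ →L[ℂ] H₂) : H₁ →L[ℂ] H₂ :=
  (1 - projC T) ∘L A ∘L (1 - projC S)

/-- `As` is the bilateral shorted operator `A/(S,T)`: there are `Bh = |A22|^(1/2)`,
`Dh = |A22*|^(1/2)` (unique positive fourth roots of `A22* A22` resp. `A22 A22*`),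
`U` the partial isometry of the polar decomposition of `A22`, and `E`, `F` the reduced
Douglas solutions of `A21 = |A22*|^(1/2) U X` and `A12* = |A22|^(1/2) X`, with
`As = A11 - F* E`. -/
def IsShorted (S : Submodule ℂ H₁) [CompleteSpace S] (T : Submodule ℂ H₂) [CompleteSpace T]
    (A As : H₁ →L[ℂ] H₂) : Prop :=
  ∃ (Bh : H₁ →L[ℂ] H₁) (Dh : H₂ →L[ℂ] H₂) (U : H₁ →L[ℂ] H₂) (E : H₁ →L[ℂ] H₁)
      (F : H₂ →L[ℂ] H₁),
    Bh.IsPositive ∧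
    Bh ∘L Bh ∘L Bh ∘L Bh = adjoint (blk22 S T A) ∘L blk22 S T A ∧
    Dh.IsPositive ∧
    Dh ∘L Dh ∘L Dh ∘L Dh = blk22 S T A ∘L adjoint (blk22 S T A) ∧
    blk22 S T A = U ∘L (Bh ∘L Bh) ∧
    (∀ x, blk22 S T A x = 0 → U x = 0) ∧
    (Dh ∘L U) ∘L E = blk21 S T A ∧
    LinearMap.range (E : H₁ →ₗ[ℂ] H₁) ≤ (LinearMap.ker (Dh ∘L U : H₁ →ₗ[ℂ] H₂))ᗮ ∧
    Bh ∘L F = adjoint (blk12 S T A) ∧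
    LinearMap.range (F : H₂ →ₗ[ℂ] H₁) ≤ (LinearMap.ker (Bh : H₁ →ₗ[ℂ] H₁))ᗮ ∧
    As = blk11 S T A - adjoint F ∘L E

/-- `A` is `(S,T)`-complementable. -/
def IsComplementable (S : Submodule ℂ H₁) [CompleteSpace S] (T : Submodule ℂ H₂)
    [CompleteSpace T] (A : H₁ →L[ℂ] H₂) : Prop :=
  LinearMap.range (blk21 S T A : H₁ →ₗ[ℂ] H₂) ≤ LinearMap.range (blk22 S T A : H₁ →ₗ[ℂ] H₂) ∧
  LinearMap.range (adjoint (blk12 S T A) : H₂ →ₗ[ℂ] H₁) ≤ LinearMap.range (adjoint (blk22 S T A) : H₂ →ₗ[ℂ] H₁)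

/-! With Douglas solutions `Y`, `Z` of `A₂₂ Y = A₂₁` and `A₂₂* Z = A₁₂*`, compressed so that
`Y = (1 - P_S) Y P_S` and `Z = (1 - P_T) Z P_T`, the idempotents are `P = P_S - Y` and
`Q = (P_T - Z)*`; `P` and `Q*` have the same kernels as `P_S` and `P_T`, which gives the
ranges of `P*` and `Q`.
Block computations give `A P = A₁₁ - A₁₂ Y` and `Q A = A₁₁ - Z* A₂₁`, and these agree since
`Z* A₂₁ = Z* A₂₂ Y = A₁₂ Y`. Finally `F* E = Z* A₂₁`: the polar decomposition intertwines as
`|A₂₂*|^(1/2) U |A₂₂|^(1/2) = A₂₂`, so `U* |A₂₂*|^(1/2) Z` is, like `F`, a solution of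
`|A₂₂|^(1/2) X = A₁₂*` with range in `(ker |A₂₂|^(1/2))ᗮ`, and such a solution is unique. -/

section Douglas

variable {𝕜 E F G : Type*} [RCLike 𝕜] [NormedAddCommGroup E] [NormedSpace 𝕜 E]
  [NormedAddCommGroup F] [NormedSpace 𝕜 F] [NormedAddCommGroup G] [InnerProductSpace 𝕜 G]

theorem ContinuousLinearMap.eq_of_apply_eq_of_mem_orthogonal_ker {C : G →L[𝕜] F} {v w : G}
    (hv : v ∈ C.kerᗮ) (hw : w ∈ C.kerᗮ) (h : C v = C w) : v = w := by
  have hker : v - w ∈ C.ker := by simpa [sub_eq_zero] using h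
  have h0 := Submodule.mem_inf.2 ⟨hker, sub_mem hv hw⟩
  rwa [Submodule.inf_orthogonal_eq_bot, Submodule.mem_bot, sub_eq_zero] at h0

theorem ContinuousLinearMap.eq_of_comp_eq_of_range_le_orthogonal_ker {C : G →L[𝕜] F}
    {X X' : E →L[𝕜] G} (hX : X.range ≤ C.kerᗮ) (hX' : X'.range ≤ C.kerᗮ)
    (h : C ∘L X = C ∘L X') : X = X' :=
  ext fun x => eq_of_apply_eq_of_mem_orthogonal_ker (hX ⟨x, rfl⟩) (hX' ⟨x, rfl⟩)
    (congrArg (· x) h)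

theorem ContinuousLinearMap.injective_comp_subtypeL_orthogonal_ker (C : G →L[𝕜] F) :
    Function.Injective (C ∘L C.kerᗮ.subtypeL) :=
  fun m m' h => Subtype.ext (eq_of_apply_eq_of_mem_orthogonal_ker m.2 m'.2 h)

variable [CompleteSpace G]

theorem ContinuousLinearMap.range_comp_subtypeL_orthogonal_ker (C : G →L[𝕜] F) :
    (C ∘L C.kerᗮ.subtypeL).range = C.range := by
  have : CompleteSpace C.ker := C.isClosed_ker.completeSpace_coe
  refine le_antisymm (LinearMap.range_comp_le_range _ _) ?_
  rintro _ ⟨g, rfl⟩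
  obtain ⟨k, hk, m, hm, rfl⟩ := C.ker.exists_add_mem_mem_orthogonal g
  exact ⟨⟨m, hm⟩, by simp [show C k = 0 from hk]⟩

/-- Douglas' factorization lemma: the solution is built on `C.kerᗮ`, where `C` is injective, and
is bounded by the closed graph theorem. -/
theorem ContinuousLinearMap.exists_comp_eq_of_range_le [CompleteSpace E] (B : E →L[𝕜] F)
    (C : G →L[𝕜] F) (h : B.range ≤ C.range) : ∃ Y : E →L[𝕜] G, C ∘L Y = B := by
  set C' := C ∘L C.kerᗮ.subtypeL
  have hinj := C.injective_comp_subtypeL_orthogonal_ker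
  have hB : ∀ x, B x ∈ C'.range := fun x =>
    C.range_comp_subtypeL_orthogonal_ker ▸ h ⟨x, rfl⟩
  let Y : E →ₗ[𝕜] C.kerᗮ :=
    (LinearEquiv.ofInjective _ hinj).symm.toLinearMap ∘ₗ (B : E →ₗ[𝕜] F).codRestrict _ hB
  have hY : ∀ x, C' (Y x) = B x := fun x =>
    congrArg Subtype.val ((LinearEquiv.ofInjective _ hinj).apply_symm_apply ⟨B x, hB x⟩)
  have hgraph : (Y.graph : Set (E × C.kerᗮ)) = {p | C' p.2 = B p.1} := by
    ext ⟨x, m⟩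
    simp only [SetLike.mem_coe, LinearMap.mem_graph_iff, Set.mem_ofPred_eq]
    exact ⟨fun hm => hm ▸ hY x, fun hm => hinj (hm.trans (hY x).symm)⟩
  have hcont : Continuous Y := Y.continuous_of_isClosed_graph <| hgraph ▸
    isClosed_eq (C'.continuous.comp continuous_snd) (B.continuous.comp continuous_fst)
  exact ⟨C.kerᗮ.subtypeL ∘L ⟨Y, hcont⟩, ContinuousLinearMap.ext hY⟩

end Douglas

section SelfAdjoint

variable {𝕜 E F G : Type*} [RCLike 𝕜] [NormedAddCommGroup E] [NormedSpace 𝕜 E]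
  [NormedAddCommGroup F] [InnerProductSpace 𝕜 F] [CompleteSpace F]
  [NormedAddCommGroup G] [InnerProductSpace 𝕜 G] [CompleteSpace G]

theorem ContinuousLinearMap.range_adjoint_le_orthogonal_ker (T : F →L[𝕜] G) :
    (adjoint T).range ≤ T.kerᗮ :=
  T.orthogonal_ker ▸ Submodule.le_topologicalClosure _

theorem IsSelfAdjoint.ker_comp_self {B : F →L[𝕜] F} (hB : IsSelfAdjoint B) :
    (B ∘L B).ker = B.ker := by
  simpa [hB.adjoint_eq] using B.ker_adjoint_comp_self

theorem IsSelfAdjoint.comp_eq_of_comp_comp_eq {B : F →L[𝕜] F} (hB : IsSelfAdjoint B)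
    {X X' : E →L[𝕜] F} (h : B ∘L B ∘L X = B ∘L B ∘L X') : B ∘L X = B ∘L X' := by
  ext x
  have hx : X x - X' x ∈ (B ∘L B).ker := by
    simpa [sub_eq_zero] using congrArg (· x) h
  rw [hB.ker_comp_self, LinearMap.mem_ker] at hx
  simpa [sub_eq_zero] using hx

end SelfAdjoint

theorem IsIdempotentElem.sub_of_mul_eq {R : Type*} [Ring R] {p y : R} (hp : IsIdempotentElem p)
    (hpy : p * y = 0) (hyp : y * p = y) : IsIdempotentElem (p - y) := by
  have hyy : y * y = 0 := by
    nth_rewrite 1 [← hyp]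
    rw [mul_assoc, hpy, mul_zero]
  simp only [IsIdempotentElem, sub_mul, mul_sub, hp.eq, hpy, hyp, hyy]
  abel

section Polar

variable {E F : Type*} [NormedAddCommGroup E] [InnerProductSpace ℂ E]
  [NormedAddCommGroup F] [InnerProductSpace ℂ F]
  {C U : E →L[ℂ] F} {B : E →L[ℂ] E} {D : F →L[ℂ] F}

theorem ker_le_ker_of_eq_comp_comp_self (hCU : C = U ∘L (B ∘L B))
    (hU : ∀ x, C x = 0 → U x = 0) : B.ker ≤ U.ker :=
  fun x hx => hU x (by simp [hCU, show B x = 0 from hx])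

variable [CompleteSpace E] [CompleteSpace F]

theorem ContinuousLinearMap.IsPositive.eq_of_comp_self_eq {X Y : E →L[ℂ] E} (hX : X.IsPositive)
    (hY : Y.IsPositive) (h : X ∘L X = Y ∘L Y) : X = Y :=
  (CFC.mul_self_eq_mul_self_iff X Y ((nonneg_iff_isPositive X).2 hX)
    ((nonneg_iff_isPositive Y).2 hY)).1 h

theorem adjoint_comp_comp_eq_of_polar (hB : IsSelfAdjoint B)
    (hB4 : B ∘L B ∘L B ∘L B = adjoint C ∘L C) (hCU : C = U ∘L (B ∘L B))
    (hU : ∀ x, C x = 0 → U x = 0) : adjoint U ∘L U ∘L B = B := by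
  have hrange : ∀ X : E →L[ℂ] E, (B ∘L X).range ≤ B.kerᗮ := fun X =>
    (LinearMap.range_comp_le_range _ _).trans
      (by simpa [hB.adjoint_eq] using B.range_adjoint_le_orthogonal_ker)
  have hrangeU : ∀ X : E →L[ℂ] F, (adjoint U ∘L X).range ≤ B.kerᗮ := fun X =>
    (LinearMap.range_comp_le_range _ _).trans <| U.range_adjoint_le_orthogonal_ker.trans
      (Submodule.orthogonal_le (ker_le_ker_of_eq_comp_comp_self hCU hU))
  have hUU : adjoint U ∘L U ∘L (B ∘L B) = B ∘L B := by
    refine eq_of_comp_eq_of_range_le_orthogonal_ker (C := B) (hrangeU _) (hrange _)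
      (hB.comp_eq_of_comp_comp_eq ?_)
    calc B ∘L B ∘L adjoint U ∘L U ∘L (B ∘L B) = adjoint C ∘L C := by
          simp only [hCU, adjoint_comp, hB.adjoint_eq, comp_assoc]
      _ = B ∘L B ∘L B ∘L B := hB4.symm
  have hUU' : B ∘L B ∘L (adjoint U ∘L U) = B ∘L B ∘L .id ℂ E := by
    simpa [adjoint_comp, hB.adjoint_eq, comp_assoc] using congrArg adjoint hUU
  simpa [adjoint_comp, hB.adjoint_eq, comp_assoc, adjoint_id] using
    congrArg adjoint (hB.comp_eq_of_comp_comp_eq hUU')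

theorem comp_comp_adjoint_eq_of_polar (hB : B.IsPositive)
    (hB4 : B ∘L B ∘L B ∘L B = adjoint C ∘L C) (hD : D.IsPositive)
    (hD4 : D ∘L D ∘L D ∘L D = C ∘L adjoint C) (hCU : C = U ∘L (B ∘L B))
    (hU : ∀ x, C x = 0 → U x = 0) : U ∘L B ∘L adjoint U = D := by
  have hUUB : ∀ x, adjoint U (U (B x)) = B x := fun x =>
    congrArg (· x) (adjoint_comp_comp_eq_of_polar hB.isSelfAdjoint hB4 hCU hU)
  have hB2 : (B ∘L B).IsPositive := by
    simpa [hB.isSelfAdjoint.adjoint_eq] using isPositive_adjoint_comp_self B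
  have hD2 : (D ∘L D).IsPositive := by
    simpa [hD.isSelfAdjoint.adjoint_eq] using isPositive_adjoint_comp_self D
  have hDD : U ∘L (B ∘L B) ∘L adjoint U = D ∘L D := by
    refine (hB2.conj_adjoint U).eq_of_comp_self_eq hD2 ?_
    calc (U ∘L (B ∘L B) ∘L adjoint U) ∘L (U ∘L (B ∘L B) ∘L adjoint U)
        = U ∘L (B ∘L B) ∘L (B ∘L B) ∘L adjoint U := by ext; simp [hUUB]
      _ = C ∘L adjoint C := by simp only [hCU, adjoint_comp, hB.isSelfAdjoint.adjoint_eq, comp_assoc]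
      _ = (D ∘L D) ∘L (D ∘L D) := by rw [← hD4]; rfl
  refine (hB.conj_adjoint U).eq_of_comp_self_eq hD ?_
  rw [← hDD]
  ext; simp [hUUB]

theorem comp_comp_eq_of_polar (hB : B.IsPositive)
    (hB4 : B ∘L B ∘L B ∘L B = adjoint C ∘L C) (hD : D.IsPositive)
    (hD4 : D ∘L D ∘L D ∘L D = C ∘L adjoint C) (hCU : C = U ∘L (B ∘L B))
    (hU : ∀ x, C x = 0 → U x = 0) : D ∘L U ∘L B = C := by
  rw [← comp_comp_adjoint_eq_of_polar hB hB4 hD hD4 hCU hU, hCU]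
  simp only [comp_assoc, adjoint_comp_comp_eq_of_polar hB.isSelfAdjoint hB4 hCU hU]

end Polar

section Projection

variable {H : Type*} [NormedAddCommGroup H] [InnerProductSpace ℂ H] [CompleteSpace H]
  {K : Submodule ℂ H} [CompleteSpace K]

theorem isIdempotentElem_projC : IsIdempotentElem (projC K) := K.isIdempotentElem_starProjection

theorem projC_comp_projC : projC K ∘L projC K = projC K := isIdempotentElem_projC

theorem projC_comp_one_sub_projC : projC K ∘L (1 - projC K) = 0 := by
  rw [comp_sub, projC_comp_projC, sub_eq_zero]; rfl

theorem one_sub_projC_comp_one_sub_projC : (1 - projC K) ∘L (1 - projC K) = 1 - projC K := by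
  rw [sub_comp, projC_comp_one_sub_projC, sub_zero]; rfl

theorem adjoint_projC : adjoint (projC K) = projC K := (isSelfAdjoint_starProjection K).adjoint_eq

theorem range_projC : (projC K).range = K := K.range_starProjection

theorem range_adjoint_projC_sub {Y : H →L[ℂ] H} (hpY : projC K ∘L Y = 0)
    (hYp : Y ∘L projC K = Y) : (adjoint (projC K - Y)).range = K := by
  have hleft : adjoint (projC K - Y) ∘L projC K = projC K := by
    have h := congrArg adjoint (show projC K ∘L (projC K - Y) = projC K by
      rw [comp_sub, hpY, sub_zero, projC_comp_projC])
    rwa [adjoint_comp, adjoint_projC] at h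
  have hright : projC K ∘L adjoint (projC K - Y) = adjoint (projC K - Y) := by
    have h := congrArg adjoint (show (projC K - Y) ∘L projC K = projC K - Y by
      rw [sub_comp, hYp, projC_comp_projC])
    rwa [adjoint_comp, adjoint_projC] at h
  refine (le_antisymm ?_ ?_).trans range_projC
  · calc (adjoint (projC K - Y)).range = (projC K ∘L adjoint (projC K - Y)).range := by
          rw [hright]
      _ ≤ (projC K).range := LinearMap.range_comp_le_range _ _
  · calc (projC K).range = (adjoint (projC K - Y) ∘L projC K).range := by rw [hleft]
      _ ≤ (adjoint (projC K - Y)).range := LinearMap.range_comp_le_range _ _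

end Projection

section Blocks

variable {S : Submodule ℂ H₁} [CompleteSpace S] {T : Submodule ℂ H₂} [CompleteSpace T]
  {A : H₁ →L[ℂ] H₂}

theorem adjoint_blk11 : adjoint (blk11 S T A) = blk11 T S (adjoint A) := by
  simp only [blk11, adjoint_comp, adjoint_projC, comp_assoc]

theorem adjoint_blk12 : adjoint (blk12 S T A) = blk21 T S (adjoint A) := by
  simp only [blk12, blk21, adjoint_comp, map_sub, adjoint_one, adjoint_projC, comp_assoc]

theorem adjoint_blk22 : adjoint (blk22 S T A) = blk22 T S (adjoint A) := by
  simp only [blk22, adjoint_comp, map_sub, adjoint_one, adjoint_projC, comp_assoc]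

theorem blk11_add_blk21 : blk11 S T A + blk21 S T A = A ∘L projC S := by
  rw [blk11, blk21, ← add_comp, add_sub_cancel]; rfl

theorem blk12_add_blk22 : blk12 S T A + blk22 S T A = A ∘L (1 - projC S) := by
  rw [blk12, blk22, ← add_comp, add_sub_cancel]; rfl

theorem blk21_comp_projC : blk21 S T A ∘L projC S = blk21 S T A := by
  rw [blk21, comp_assoc, comp_assoc, projC_comp_projC]

theorem blk22_comp_one_sub_projC : blk22 S T A ∘L (1 - projC S) = blk22 S T A := by
  rw [blk22, comp_assoc, comp_assoc, one_sub_projC_comp_one_sub_projC]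

theorem exists_blk22_comp_eq_blk21 (h : (blk21 S T A).range ≤ (blk22 S T A).range) :
    ∃ Y : H₁ →L[ℂ] H₁, blk22 S T A ∘L Y = blk21 S T A ∧ projC S ∘L Y = 0 ∧
      Y ∘L projC S = Y := by
  obtain ⟨Y, hY⟩ := (blk21 S T A).exists_comp_eq_of_range_le _ h
  refine ⟨(1 - projC S) ∘L Y ∘L projC S, ?_, ?_, ?_⟩
  · rw [← comp_assoc, blk22_comp_one_sub_projC, ← comp_assoc, hY, blk21_comp_projC]
  · rw [← comp_assoc, projC_comp_one_sub_projC, zero_comp]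
  · rw [comp_assoc, comp_assoc, projC_comp_projC]

theorem comp_projC_sub_eq {Y : H₁ →L[ℂ] H₁} (hY : blk22 S T A ∘L Y = blk21 S T A)
    (hpY : projC S ∘L Y = 0) : A ∘L (projC S - Y) = blk11 S T A - blk12 S T A ∘L Y := by
  have hAY : A ∘L Y = blk12 S T A ∘L Y + blk21 S T A := by
    rw [← hY, ← add_comp, blk12_add_blk22, comp_assoc, sub_comp, hpY, sub_zero]; rfl
  rw [comp_sub, hAY, ← blk11_add_blk21 (T := T)]
  abel

end Blocks

theorem shorted_eq_QA_eq_AP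
    (S : Submodule ℂ H₁) [CompleteSpace S] (T : Submodule ℂ H₂) [CompleteSpace T]
    (A As : H₁ →L[ℂ] H₂) (hc : IsComplementable S T A) (hAs : IsShorted S T A As) :
    ∃ (P : H₁ →L[ℂ] H₁) (Q : H₂ →L[ℂ] H₂),
      IsIdempotentElem P ∧ IsIdempotentElem Q ∧
      LinearMap.range (adjoint P : H₁ →ₗ[ℂ] H₁) = S ∧ LinearMap.range (Q : H₂ →ₗ[ℂ] H₂) = T ∧
      Q ∘L A = As ∧ A ∘L P = As := by
  obtain ⟨B, D, U, E, F, hB, hB4, hD, hD4, hCU, hU, hE, -, hF, hFran, rfl⟩ := hAs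
  obtain ⟨Y, hY, hpY, hYp⟩ := exists_blk22_comp_eq_blk21 hc.1
  obtain ⟨Z, hZ, hqZ, hZq⟩ := exists_blk22_comp_eq_blk21 (A := adjoint A)
    (by simpa only [adjoint_blk12, adjoint_blk22] using hc.2)
  have hFZ : F = adjoint U ∘L D ∘L Z := by
    refine eq_of_comp_eq_of_range_le_orthogonal_ker hFran
      ((LinearMap.range_comp_le_range _ _).trans (U.range_adjoint_le_orthogonal_ker.trans
        (Submodule.orthogonal_le (ker_le_ker_of_eq_comp_comp_self hCU hU)))) ?_
    rw [hF, adjoint_blk12, ← hZ, ← adjoint_blk22, ← comp_comp_eq_of_polar hB hB4 hD hD4 hCU hU]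
    simp only [adjoint_comp, hB.isSelfAdjoint.adjoint_eq, hD.isSelfAdjoint.adjoint_eq, comp_assoc]
  have hFE : adjoint F ∘L E = adjoint Z ∘L blk21 S T A := by
    rw [hFZ, ← hE]
    simp only [adjoint_comp, adjoint_adjoint, hD.isSelfAdjoint.adjoint_eq, comp_assoc]
  have hZY : adjoint Z ∘L blk21 S T A = blk12 S T A ∘L Y := by
    rw [← hY, ← comp_assoc, ← adjoint_adjoint (blk12 S T A), adjoint_blk12, ← hZ, adjoint_comp,
      ← adjoint_blk22, adjoint_adjoint]
  have hQA : adjoint (projC T - Z) ∘L A = blk11 S T A - adjoint Z ∘L blk21 S T A := by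
    simpa only [adjoint_comp, adjoint_adjoint, map_sub, adjoint_blk11, adjoint_blk12] using
      congrArg adjoint (comp_projC_sub_eq hZ hqZ)
  refine ⟨projC S - Y, adjoint (projC T - Z), isIdempotentElem_projC.sub_of_mul_eq hpY hYp,
    (isIdempotentElem_projC.sub_of_mul_eq hqZ hZq).star, range_adjoint_projC_sub hpY hYp,
    range_adjoint_projC_sub hqZ hZq, ?_, ?_⟩
  · rw [hQA, hFE]
  · rw [comp_projC_sub_eq hY hpY, hFE, hZY]
end

section
/- Let A, B : H1 → H2 be bounded operators between Hilbert spaces. The following are equivalent: (1) the Dixmier angle cosine c₀(closure(R(A)), closure(R(B−A))) < 1; (2) there exists a projection Q ∈ L(H2) with R(Q) = closure(R(A)) and A = Q B; (3) there exists a projection Q ∈ L(H2) with A = Q B. -/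
/-!
If `c = c₀(M, N) < 1`, then `(1 - c) (‖x‖² + ‖y‖²) ≤ ‖x + y‖²` for `x ∈ M`, `y ∈ N`. Hence
`M ⊔ N` is closed, `M ⊓ N = 0`, and `M` is complemented by the closed subspace
`N ⊔ (M ⊔ N)ᗮ`; the projection along it is bounded because both pieces are closed. Conversely,
if a bounded `Q` fixes `M` and kills `N`, then `1 = ‖Q (x - c • y)‖ ≤ ‖Q‖ ‖x - c • y‖` for unit
`x ∈ M`, `y ∈ N` and every `c` of modulus one, and choosing `c` to rotate `⟪x, y⟫` onto
`|⟪x, y⟫|` gives `|⟪x, y⟫| ≤ 1 - 1 / (2 ‖Q‖²)`.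

For `M = closure R(A)` and `N = closure R(B - A)`, a projection `Q` onto `M` satisfies `A = Q B`
exactly when `Q (B - A) = 0`. A projection `Q` with `A = Q B` only has `M ⊆ R(Q)`; composing it
with the orthogonal projection onto `M` gives one with range exactly `M`.
-/

open ContinuousLinearMap Submodule

noncomputable def dixmierAngle {H : Type*} [NormedAddCommGroup H] [InnerProductSpace ℂ H]
    (M N : Submodule ℂ H) : ℝ :=
  sSup {r : ℝ | ∃ x ∈ M, ∃ y ∈ N, ‖x‖ = 1 ∧ ‖y‖ = 1 ∧ r = ‖(inner ℂ x y : ℂ)‖}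

theorem exists_norm_sub_smul_sq_eq {𝕜 E : Type*} [RCLike 𝕜] [NormedAddCommGroup E]
    [InnerProductSpace 𝕜 E] (x y : E) :
    ∃ c : 𝕜, ‖c‖ = 1 ∧ ‖x - c • y‖ ^ 2 = ‖x‖ ^ 2 - 2 * ‖(inner 𝕜 x y : 𝕜)‖ + ‖y‖ ^ 2 := by
  obtain ⟨c, hc, hcz⟩ := RCLike.exists_norm_eq_mul_self (inner 𝕜 x y : 𝕜)
  refine ⟨c, hc, ?_⟩
  rw [@norm_sub_sq 𝕜, inner_smul_right, ← hcz, RCLike.ofReal_re, norm_smul, hc, one_mul]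

theorem Submodule.isClosed_sup_of_norm_le_mul_norm_add {𝕜 E : Type*} [NontriviallyNormedField 𝕜]
    [NormedAddCommGroup E] [NormedSpace 𝕜 E] [CompleteSpace E] {M N : Submodule 𝕜 E}
    (hM : IsClosed (M : Set E)) (hN : IsClosed (N : Set E)) {C : ℝ}
    (hC : ∀ x ∈ M, ∀ y ∈ N, ‖x‖ ≤ C * ‖x + y‖) : IsClosed ((M ⊔ N : Submodule 𝕜 E) : Set E) := by
  have := hM.completeSpace_coe
  have := hN.completeSpace_coe
  let f : M × N →L[𝕜] E := M.subtypeL.coprod N.subtypeL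
  have hf : AntilipschitzWith (Real.toNNReal (C + 1)) f := by
    refine f.antilipschitz_of_bound fun p => ?_
    have hx := hC p.1 p.1.2 p.2 p.2.2
    have hy : ‖(p.2 : E)‖ ≤ ‖(p.1 : E) + p.2‖ + ‖(p.1 : E)‖ := by
      simpa using norm_sub_le ((p.1 : E) + p.2) p.1
    have hp : ‖p‖ ≤ (C + 1) * ‖(p.1 : E) + p.2‖ := by
      rw [Prod.norm_def, max_le_iff]
      constructor <;> simp only [Submodule.coe_norm] <;> nlinarith [norm_nonneg ((p.1 : E) + p.2)]
    exact hp.trans (mul_le_mul_of_nonneg_right (Real.le_coe_toNNReal _) (norm_nonneg _))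
  have hrange : Set.range f = (M ⊔ N : Submodule 𝕜 E) := by
    rw [Submodule.sup_eq_range]
    rfl
  exact hrange ▸ hf.isClosed_range f.uniformContinuous

section DixmierAngle

variable {H : Type*} [NormedAddCommGroup H] [InnerProductSpace ℂ H] {M N : Submodule ℂ H}

theorem le_dixmierAngle {x y : H} (hx : x ∈ M) (hy : y ∈ N) (hx1 : ‖x‖ = 1) (hy1 : ‖y‖ = 1) :
    ‖(inner ℂ x y : ℂ)‖ ≤ dixmierAngle M N := by
  refine le_csSup ⟨1, ?_⟩ ⟨x, hx, y, hy, hx1, hy1, rfl⟩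
  rintro _ ⟨x, -, y, -, hx1, hy1, rfl⟩
  simpa [hx1, hy1] using norm_inner_le_norm (𝕜 := ℂ) x y

theorem dixmierAngle_le {a : ℝ} (ha : 0 ≤ a)
    (h : ∀ x ∈ M, ∀ y ∈ N, ‖x‖ = 1 → ‖y‖ = 1 → ‖(inner ℂ x y : ℂ)‖ ≤ a) :
    dixmierAngle M N ≤ a := by
  refine Real.sSup_le ?_ ha
  rintro _ ⟨x, hx, y, hy, hx1, hy1, rfl⟩
  exact h x hx y hy hx1 hy1

theorem dixmierAngle_nonneg : 0 ≤ dixmierAngle M N :=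
  Real.sSup_nonneg <| by
    rintro _ ⟨x, -, y, -, -, -, rfl⟩
    positivity

theorem dixmierAngle_eq_zero_of_isOrtho (h : M ⟂ N) : dixmierAngle M N = 0 :=
  le_antisymm (dixmierAngle_le le_rfl fun x hx y hy _ _ => by simp [h.inner_eq hx hy])
    dixmierAngle_nonneg

theorem norm_inner_le_dixmierAngle_mul {x y : H} (hx : x ∈ M) (hy : y ∈ N) :
    ‖(inner ℂ x y : ℂ)‖ ≤ dixmierAngle M N * (‖x‖ * ‖y‖) := by
  rcases eq_or_ne x 0 with rfl | hx0
  · simp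
  rcases eq_or_ne y 0 with rfl | hy0
  · simp
  have h := le_dixmierAngle (M.smul_mem (‖x‖ : ℂ)⁻¹ hx) (N.smul_mem (‖y‖ : ℂ)⁻¹ hy)
    (norm_smul_inv_norm hx0) (norm_smul_inv_norm hy0)
  simp only [inner_smul_left, inner_smul_right, norm_mul, RCLike.norm_conj, norm_inv,
    Complex.norm_real, norm_norm] at h
  rwa [inv_mul_eq_div, inv_mul_eq_div, div_div, div_le_iff₀ (by positivity)] at h

theorem one_sub_dixmierAngle_mul_le_norm_add_sq {x y : H} (hx : x ∈ M) (hy : y ∈ N) :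
    (1 - dixmierAngle M N) * (‖x‖ ^ 2 + ‖y‖ ^ 2) ≤ ‖x + y‖ ^ 2 := by
  have hre : -‖(inner ℂ x y : ℂ)‖ ≤ RCLike.re (inner ℂ x y : ℂ) :=
    neg_le_of_abs_le (RCLike.abs_re_le_norm _)
  have := norm_inner_le_dixmierAngle_mul hx hy
  nlinarith [@norm_add_sq ℂ _ _ _ _ x y, mul_nonneg (dixmierAngle_nonneg (M := M) (N := N))
    (sq_nonneg (‖x‖ - ‖y‖))]

theorem one_sub_dixmierAngle_mul_norm_le_norm_add {x y : H} (hx : x ∈ M) (hy : y ∈ N) :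
    (1 - dixmierAngle M N) * ‖x‖ ≤ ‖x + y‖ := by
  rcases le_or_gt (dixmierAngle M N) 1 with hc | hc
  · have := one_sub_dixmierAngle_mul_le_norm_add_sq hx hy
    have h0 := dixmierAngle_nonneg (M := M) (N := N)
    refine le_of_pow_le_pow_left₀ two_ne_zero (norm_nonneg _) ?_
    nlinarith [sq_nonneg ‖x‖, sq_nonneg ‖y‖, mul_nonneg h0 (sq_nonneg ‖x‖)]
  · nlinarith [norm_nonneg x, norm_nonneg (x + y)]

theorem isClosed_sup_of_dixmierAngle_lt_one [CompleteSpace H] (hM : IsClosed (M : Set H))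
    (hN : IsClosed (N : Set H)) (hc : dixmierAngle M N < 1) :
    IsClosed ((M ⊔ N : Submodule ℂ H) : Set H) := by
  refine isClosed_sup_of_norm_le_mul_norm_add hM hN (C := (1 - dixmierAngle M N)⁻¹)
    fun x hx y hy => ?_
  rw [inv_mul_eq_div, le_div_iff₀ (sub_pos.2 hc), mul_comm]
  exact one_sub_dixmierAngle_mul_norm_le_norm_add hx hy

theorem disjoint_of_dixmierAngle_lt_one (hc : dixmierAngle M N < 1) : Disjoint M N := by
  refine Submodule.disjoint_def.2 fun x hxM hxN => ?_
  have h := one_sub_dixmierAngle_mul_norm_le_norm_add hxM (N.neg_mem hxN)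
  rw [add_neg_cancel, norm_zero] at h
  exact norm_le_zero_iff.1 (nonpos_of_mul_nonpos_right h (sub_pos.2 hc))

theorem exists_isIdempotentElem_of_dixmierAngle_lt_one [CompleteSpace H]
    (hM : IsClosed (M : Set H)) (hN : IsClosed (N : Set H)) (hc : dixmierAngle M N < 1) :
    ∃ Q : H →L[ℂ] H, IsIdempotentElem Q ∧ LinearMap.range (Q : H →ₗ[ℂ] H) = M ∧
      N ≤ LinearMap.ker (Q : H →ₗ[ℂ] H) := by
  set S := M ⊔ N
  have := (isClosed_sup_of_dixmierAngle_lt_one hM hN hc).completeSpace_coe (s := (S : Set H))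
  have hK : IsClosed ((N ⊔ Sᗮ : Submodule ℂ H) : Set H) := by
    refine isClosed_sup_of_dixmierAngle_lt_one hN S.isClosed_orthogonal ?_
    rw [dixmierAngle_eq_zero_of_isOrtho (S.isOrtho_orthogonal_right.mono_left le_sup_right)]
    exact one_pos
  have hcompl : IsCompl M (N ⊔ Sᗮ) :=
    (disjoint_of_dixmierAngle_lt_one hc).isCompl_sup_right_of_isCompl_sup_left S.isCompl_orthogonal
  have htop := hcompl.isTopCompl_of_isClosed hM hK
  exact ⟨M.projectionL _ htop, isIdempotentElem_projectionL htop, range_projectionL htop,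
    (ker_projectionL htop).symm ▸ le_sup_left⟩

theorem one_le_sq_opNorm_mul_of_apply_eq (T : H →L[ℂ] H) (hTM : ∀ x ∈ M, T x = x)
    (hTN : ∀ y ∈ N, T y = 0) {x y : H} (hx : x ∈ M) (hy : y ∈ N) (hx1 : ‖x‖ = 1)
    (hy1 : ‖y‖ = 1) : 1 ≤ ‖T‖ ^ 2 * (2 - 2 * ‖(inner ℂ x y : ℂ)‖) := by
  obtain ⟨c, -, hc⟩ := exists_norm_sub_smul_sq_eq (𝕜 := ℂ) x y
  have hTx : T (x - c • y) = x := by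
    rw [map_sub, map_smul, hTM x hx, hTN y hy, smul_zero, sub_zero]
  have h := T.le_opNorm (x - c • y)
  rw [hTx, hx1] at h
  calc (1 : ℝ) ≤ (‖T‖ * ‖x - c • y‖) ^ 2 := one_le_pow₀ h
    _ = ‖T‖ ^ 2 * (2 - 2 * ‖(inner ℂ x y : ℂ)‖) := by rw [mul_pow, hc, hx1, hy1]; ring

theorem dixmierAngle_lt_one_of_apply_eq (T : H →L[ℂ] H) (hTM : ∀ x ∈ M, T x = x)
    (hTN : ∀ y ∈ N, T y = 0) : dixmierAngle M N < 1 := by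
  have hpos : 0 < 2 * (‖T‖ ^ 2 + 1) := by positivity
  have hbound : dixmierAngle M N ≤ 1 - 1 / (2 * (‖T‖ ^ 2 + 1)) := by
    refine dixmierAngle_le ?_ fun x hx y hy hx1 hy1 => ?_
    · rw [sub_nonneg, div_le_one hpos]
      nlinarith [sq_nonneg ‖T‖]
    · have h := one_le_sq_opNorm_mul_of_apply_eq T hTM hTN hx hy hx1 hy1
      rw [le_sub_comm, div_le_iff₀ hpos]
      nlinarith [sq_nonneg ‖T‖]
  exact hbound.trans_lt (sub_lt_self _ (by positivity))

theorem dixmierAngle_lt_one_iff [CompleteSpace H] (hM : IsClosed (M : Set H))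
    (hN : IsClosed (N : Set H)) :
    dixmierAngle M N < 1 ↔ ∃ Q : H →L[ℂ] H, IsIdempotentElem Q ∧
      LinearMap.range (Q : H →ₗ[ℂ] H) = M ∧ N ≤ LinearMap.ker (Q : H →ₗ[ℂ] H) := by
  refine ⟨exists_isIdempotentElem_of_dixmierAngle_lt_one hM hN, ?_⟩
  rintro ⟨Q, hQ, hQM, hQN⟩
  refine dixmierAngle_lt_one_of_apply_eq Q (fun x hx => ?_) fun y hy => hQN hy
  exact (LinearMap.IsIdempotentElem.mem_range_iff hQ.toLinearMap).1 (hQM ▸ hx)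

end DixmierAngle

theorem topologicalClosure_range_sub_le_ker_iff_eq_comp {𝕜 E F : Type*}
    [NontriviallyNormedField 𝕜] [NormedAddCommGroup E] [NormedSpace 𝕜 E] [NormedAddCommGroup F]
    [NormedSpace 𝕜 F] {A B : E →L[𝕜] F} {Q : F →L[𝕜] F} (hQ : IsIdempotentElem Q)
    (hA : LinearMap.range (A : E →ₗ[𝕜] F) ≤ LinearMap.range (Q : F →ₗ[𝕜] F)) :
    (LinearMap.range ((B - A : E →L[𝕜] F) : E →ₗ[𝕜] F)).topologicalClosure ≤
        LinearMap.ker (Q : F →ₗ[𝕜] F) ↔ A = Q ∘L B := by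
  have hQA : Q ∘L A = A :=
    ContinuousLinearMap.ext fun v => (LinearMap.IsIdempotentElem.mem_range_iff hQ.toLinearMap).1
      (hA ⟨v, rfl⟩)
  have hclosure : ∀ R : Submodule 𝕜 F, R.topologicalClosure ≤ LinearMap.ker (Q : F →ₗ[𝕜] F) ↔
      R ≤ LinearMap.ker (Q : F →ₗ[𝕜] F) := fun R =>
    ⟨(R.le_topologicalClosure).trans, fun h => R.topologicalClosure_minimal h (isClosed_ker Q)⟩
  rw [hclosure, LinearMap.range_le_ker_iff, ← ContinuousLinearMap.toLinearMap_comp,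
    ← ContinuousLinearMap.toLinearMap_zero, ContinuousLinearMap.coe_inj, comp_sub, hQA, sub_eq_zero,
    eq_comm]

theorem exists_isIdempotentElem_range_eq_of_eq_comp {𝕜 E F : Type*} [RCLike 𝕜]
    [NormedAddCommGroup E] [NormedSpace 𝕜 E] [NormedAddCommGroup F] [InnerProductSpace 𝕜 F]
    [CompleteSpace F] {A B : E →L[𝕜] F} {Q : F →L[𝕜] F} (hQ : IsIdempotentElem Q)
    (hAB : A = Q ∘L B) :
    ∃ Q' : F →L[𝕜] F, IsIdempotentElem Q' ∧
      LinearMap.range (Q' : F →ₗ[𝕜] F) = (LinearMap.range (A : E →ₗ[𝕜] F)).topologicalClosure ∧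
        A = Q' ∘L B := by
  set M := (LinearMap.range (A : E →ₗ[𝕜] F)).topologicalClosure
  have := (LinearMap.range (A : E →ₗ[𝕜] F)).isClosed_topologicalClosure.completeSpace_coe
  set P := M.starProjection
  have hPM : ∀ x ∈ M, P x = x := fun x hx => M.starProjection_eq_self_iff.2 hx
  have hMQ : M ≤ LinearMap.range (Q : F →ₗ[𝕜] F) := by
    refine topologicalClosure_minimal _ ?_ (IsIdempotentElem.isClosed_range hQ)
    rintro _ ⟨v, rfl⟩
    exact ⟨B v, by simp [hAB]⟩
  have hQM : ∀ x ∈ M, Q x = x := fun x hx =>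
    (LinearMap.IsIdempotentElem.mem_range_iff hQ.toLinearMap).1 (hMQ hx)
  have hQP : Q * P = P := ContinuousLinearMap.ext fun x => hQM _ (M.starProjection_apply_mem x)
  refine ⟨P * Q, ?_, le_antisymm ?_ ?_, ?_⟩
  · rw [IsIdempotentElem, mul_assoc, ← mul_assoc Q, hQP, ← mul_assoc,
      M.isIdempotentElem_starProjection.eq]
  · rintro _ ⟨x, rfl⟩
    exact M.starProjection_apply_mem (Q x)
  · refine fun x hx => ⟨x, ?_⟩
    change P (Q x) = x
    rw [hQM x hx, hPM x hx]
  · ext v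
    have hQB : Q (B v) = A v := by rw [hAB, comp_apply]
    change A v = P (Q (B v))
    have hAv : A v ∈ M := (LinearMap.range (A : E →ₗ[𝕜] F)).le_topologicalClosure ⟨v, rfl⟩
    rw [hQB, hPM _ hAv]

variable {H₁ H₂ : Type*} [NormedAddCommGroup H₁] [InnerProductSpace ℂ H₁] [CompleteSpace H₁]
  [NormedAddCommGroup H₂] [InnerProductSpace ℂ H₂] [CompleteSpace H₂]

theorem dixmier_lt_one_iff_projection (A B : H₁ →L[ℂ] H₂) :
    (dixmierAngle (LinearMap.range (A : H₁ →ₗ[ℂ] H₂)).topologicalClosure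
        (LinearMap.range ((B - A : H₁ →L[ℂ] H₂) : H₁ →ₗ[ℂ] H₂)).topologicalClosure < 1 ↔
      ∃ Q : H₂ →L[ℂ] H₂, IsIdempotentElem Q ∧
        LinearMap.range (Q : H₂ →ₗ[ℂ] H₂) = (LinearMap.range (A : H₁ →ₗ[ℂ] H₂)).topologicalClosure ∧
          A = Q ∘L B) ∧
    ((∃ Q : H₂ →L[ℂ] H₂, IsIdempotentElem Q ∧
        LinearMap.range (Q : H₂ →ₗ[ℂ] H₂) = (LinearMap.range (A : H₁ →ₗ[ℂ] H₂)).topologicalClosure ∧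
          A = Q ∘L B) ↔
      ∃ Q : H₂ →L[ℂ] H₂, IsIdempotentElem Q ∧ A = Q ∘L B) := by
  refine ⟨?_, fun ⟨Q, hQ, _, hAB⟩ => ⟨Q, hQ, hAB⟩,
    fun ⟨Q, hQ, hAB⟩ => exists_isIdempotentElem_range_eq_of_eq_comp hQ hAB⟩
  rw [dixmierAngle_lt_one_iff (isClosed_topologicalClosure _) (isClosed_topologicalClosure _)]
  refine exists_congr fun Q => and_congr_right fun hQ => and_congr_right fun hQA => ?_
  exact topologicalClosure_range_sub_le_ker_iff_eq_comp hQ (hQA ▸ le_topologicalClosure _)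
end
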